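/- Let A : (a,b) → ℝ^{n×n} be measurable and locally essentially bounded, with transition matrix Φ, and suppose Φ(t,t0) is totally positive (TP) for all a < t0 < t < b. Let z be a nontrivial solution of ż = A(t)z, i.e. z(t) = Φ(t,t0)z0 with z0 ≠ 0. If z(τ) ∉ V for some τ ∈ (a,b), then for all s, t with a < s < τ < t < b one has s^+(z(t)) < s^+(z(s)); that is, s^+(z(·)) strictly decreases across any time at which the solution leaves the set V. -/

import Mathlib

open Matrix MeasureTheory Set Polynomial Filter

noncomputable section

/-- Number of sign changes between adjacent entries of a list of reals. -/
def signChanges : List ℝ → ℕ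
  | [] => 0
  | [_] => 0
  | a :: b :: l => (if a * b < 0 then 1 else 0) + signChanges (b :: l)

/-- `s^-(y)`: the number of sign variations in `y` after deleting all zero entries. -/
def sMinus {n : ℕ} (y : Fin n → ℝ) : ℕ :=
  signChanges ((List.ofFn y).filter (fun x => decide (x ≠ 0)))

/-- `s^+(y)`: the maximal number of sign variations in `y` after each zero entry is
replaced by either `+1` or `-1`. -/
def sPlus {n : ℕ} (y : Fin n → ℝ) : ℕ :=
  Finset.univ.sup fun ε : Fin n → Bool =>
    signChanges (List.ofFn fun i => if y i = 0 then (if ε i then (1:ℝ) else -1) else y i)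

/-- A matrix is totally positive if all its minors are positive. -/
def IsTP {n m : ℕ} (A : Matrix (Fin n) (Fin m) ℝ) : Prop :=
  ∀ (k : ℕ) (r : Fin k → Fin n) (c : Fin k → Fin m),
    StrictMono r → StrictMono c → 0 < (A.submatrix r c).det

/-- A matrix is totally nonnegative if all its minors are nonnegative. -/
def IsTN {n m : ℕ} (A : Matrix (Fin n) (Fin m) ℝ) : Prop :=
  ∀ (k : ℕ) (r : Fin k → Fin n) (c : Fin k → Fin m),
    StrictMono r → StrictMono c → 0 ≤ (A.submatrix r c).det

/-- Tridiagonal with nonnegative sub- and super-diagonal entries. -/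
def InM {n : ℕ} (A : Matrix (Fin n) (Fin n) ℝ) : Prop :=
  (∀ i j : Fin n, ((i : ℕ) + 1 < (j : ℕ) ∨ (j : ℕ) + 1 < (i : ℕ)) → A i j = 0) ∧
  (∀ i j : Fin n, ((i : ℕ) = (j : ℕ) + 1 ∨ (j : ℕ) = (i : ℕ) + 1) → 0 ≤ A i j)

/-- Tridiagonal with positive sub- and super-diagonal entries. -/
def InMPlus {n : ℕ} (A : Matrix (Fin n) (Fin n) ℝ) : Prop :=
  (∀ i j : Fin n, ((i : ℕ) + 1 < (j : ℕ) ∨ (j : ℕ) + 1 < (i : ℕ)) → A i j = 0) ∧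
  (∀ i j : Fin n, ((i : ℕ) = (j : ℕ) + 1 ∨ (j : ℕ) = (i : ℕ) + 1) → 0 < A i j)

/-- `A` is measurable and locally essentially bounded on `(a,b)` (entrywise). -/
def GoodCoeff {n : ℕ} (a b : ℝ) (A : ℝ → Matrix (Fin n) (Fin n) ℝ) : Prop :=
  (∀ i j, Measurable fun t => A t i j) ∧
  ∀ K : Set ℝ, K ⊆ Set.Ioo a b → IsCompact K →
    ∃ C : ℝ, ∀ᵐ t ∂volume, t ∈ K → ∀ i j, |A t i j| ≤ C

/-- `Φ` is the transition matrix of `ż = A(t)z` on `(a,b)`, encoded through the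
equivalent integral equation `Φ(t,t0) = I + ∫_{t0}^t A(s)Φ(s,t0) ds`. -/
def IsTransitionOn {n : ℕ} (a b : ℝ) (A : ℝ → Matrix (Fin n) (Fin n) ℝ)
    (Φ : ℝ → ℝ → Matrix (Fin n) (Fin n) ℝ) : Prop :=
  ∀ t0 ∈ Set.Ioo a b, ∀ t ∈ Set.Ioo a b, ∀ i j,
    Φ t t0 i j = (1 : Matrix (Fin n) (Fin n) ℝ) i j + ∫ s in t0..t, (A s * Φ s t0) i j

/-!
Along the solution, `z t = Φ(t,τ) z(τ)` and `z τ = Φ(τ,s) z(s)` with `z(s), z(τ) ≠ 0` (TP matrices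
are invertible), so the theorem is the chain
`s⁺(z t) ≤ s⁻(z τ) < s⁺(z τ) ≤ s⁻(z s) ≤ s⁺(z s)`, whose first and third steps are the
variation-diminishing property `s⁺(A x) ≤ s⁻(x)` of a TP matrix `A` and `x ≠ 0`.

For the latter, cut `x` into `k + 1 = s⁻(x) + 1` runs of consecutive entries of constant sign, so
that `x = P c` where column `p` of `P ≥ 0` is supported on run `p`. By multilinearity, every maximal
minor of `B = A P` is a nonnegative combination of minors of `A` with increasing columns, at least
one with positive weight, hence positive. If `s⁺(B c) > k`, some `k + 2` rows of `B c` weakly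
alternate in sign; bordering those rows of `B` by the column `B c` gives a singular matrix, and in
its Laplace expansion along that column all terms have the same sign. So `B c` vanishes on these
rows, and the positive minor of `B` on the first `k + 1` of them forces `c = 0`.
-/

lemma signChanges_cons_cons (a b : ℝ) (l : List ℝ) :
    signChanges (a :: b :: l) = (if a * b < 0 then 1 else 0) + signChanges (b :: l) := rfl

lemma signChanges_le_cons (a : ℝ) (l : List ℝ) : signChanges l ≤ signChanges (a :: l) := by
  cases l with
  | nil => exact le_rfl
  | cons b t => rw [signChanges_cons_cons]; omega

lemma signChanges_cons_le_cons_cons (a b : ℝ) (l : List ℝ) (hb : b ≠ 0) :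
    signChanges (a :: l) ≤ signChanges (a :: b :: l) := by
  cases l with
  | nil => exact Nat.zero_le _
  | cons c t =>
    simp only [signChanges_cons_cons]
    have : a * c < 0 → a * b < 0 ∨ b * c < 0 := by
      intro h
      by_contra! h'
      nlinarith [mul_nonneg h'.1 h'.2, mul_self_pos.2 hb]
    split_ifs at * <;> simp_all; omega

lemma signChanges_cons_le_of_sublist {l₁ l₂ : List ℝ} (h : l₁.Sublist l₂)
    (h₂ : ∀ x ∈ l₂, x ≠ 0) (a : ℝ) : signChanges (a :: l₁) ≤ signChanges (a :: l₂) := by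
  induction h generalizing a with
  | slnil => exact le_rfl
  | cons b _ ih =>
    exact (ih (fun x hx => h₂ x (.tail _ hx)) a).trans
      (signChanges_cons_le_cons_cons a b _ (h₂ b (.head _)))
  | cons_cons b _ ih =>
    rw [signChanges_cons_cons, signChanges_cons_cons]
    exact Nat.add_le_add_left (ih (fun x hx => h₂ x (.tail _ hx)) b) _

lemma signChanges_le_of_sublist {l₁ l₂ : List ℝ} (h : l₁.Sublist l₂) (h₂ : ∀ x ∈ l₂, x ≠ 0) :
    signChanges l₁ ≤ signChanges l₂ := by
  induction h with
  | slnil => exact le_rfl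
  | cons b _ ih => exact (ih fun x hx => h₂ x (.tail _ hx)).trans (signChanges_le_cons b _)
  | cons_cons b h _ => exact signChanges_cons_le_of_sublist h (fun x hx => h₂ x (.tail _ hx)) b

theorem sMinus_le_sPlus {n : ℕ} (y : Fin n → ℝ) : sMinus y ≤ sPlus y := by
  let d : Fin n → ℝ := fun i => if y i = 0 then 1 else y i
  have hsub : ((List.ofFn y).filter fun u => decide (u ≠ 0)).Sublist (List.ofFn d) := by
    rw [List.ofFn_eq_map, List.ofFn_eq_map, List.filter_map]
    have hyd : ∀ i ∈ (List.finRange n).filter ((fun u => decide (u ≠ 0)) ∘ y), y i = d i := by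
      intro i hi
      simp only [List.mem_filter, Function.comp_apply, decide_eq_true_eq] at hi
      simp [d, hi.2]
    rw [List.map_congr_left hyd]
    exact List.filter_sublist.map d
  have hd : ∀ u ∈ List.ofFn d, u ≠ 0 := by
    simp only [List.mem_ofFn, d]
    rintro _ ⟨i, rfl⟩
    split_ifs with h <;> simp [h]
  exact (signChanges_le_of_sublist hsub hd).trans
    (Finset.le_sup (f := fun ε : Fin n → Bool => signChanges (List.ofFn fun i =>
      if y i = 0 then (if ε i then (1:ℝ) else -1) else y i)) (Finset.mem_univ fun _ => true))

lemma signChanges_ofFn_succ_succ {n : ℕ} (d : Fin (n + 2) → ℝ) :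
    signChanges (List.ofFn d) =
      (if d 0 * d 1 < 0 then 1 else 0) + signChanges (List.ofFn (Fin.tail d)) := by
  simp only [List.ofFn_succ]
  rfl

lemma exists_strictMono_alternating_of_le_signChanges {n m : ℕ} (d : Fin (n + 1) → ℝ)
    (hd : ∀ i, d i ≠ 0) (hm : m ≤ signChanges (List.ofFn d)) :
    ∃ r : Fin (m + 1) → Fin (n + 1), StrictMono r ∧
      ∀ i : Fin (m + 1), 0 < (-1) ^ (i : ℕ) * d 0 * d (r i) := by
  induction n generalizing m with
  | zero =>
    obtain rfl : m = 0 := by simpa [signChanges] using hm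
    exact ⟨fun _ => 0, Subsingleton.strictMono (α := Fin 1) _, by simpa using mul_self_pos.2 (hd 0)⟩
  | succ n ih =>
    rcases m with _ | m
    · exact ⟨fun _ => 0, Subsingleton.strictMono (α := Fin 1) _,
        by simpa using mul_self_pos.2 (hd 0)⟩
    rw [signChanges_ofFn_succ_succ] at hm
    have hd' : ∀ i, Fin.tail d i ≠ 0 := fun i => hd i.succ
    by_cases h01 : d 0 * d 1 < 0
    · rw [if_pos h01] at hm
      obtain ⟨r, hr, halt⟩ := ih (Fin.tail d) hd' (m := m) (by omega)
      refine ⟨Fin.cons 0 (Fin.succ ∘ r), Fin.strictMono_cons.2 ⟨fun i => Fin.succ_pos _,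
        Fin.strictMono_succ.comp hr⟩, Fin.cases ?_ fun i => ?_⟩
      · simpa using mul_self_pos.2 (hd 0)
      have := mul_pos (halt i) (neg_pos.2 h01)
      simp only [Fin.cons_succ, Fin.val_succ, Function.comp_apply, pow_succ]
      simp only [Fin.tail, Fin.succ_zero_eq_one] at this
      nlinarith [mul_self_pos.2 (hd 1)]
    · rw [if_neg h01, zero_add] at hm
      have h01 : 0 < d 0 * d 1 := lt_of_le_of_ne (not_lt.1 h01) (mul_ne_zero (hd 0) (hd 1)).symm
      obtain ⟨r, hr, halt⟩ := ih (Fin.tail d) hd' hm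
      refine ⟨Fin.succ ∘ r, Fin.strictMono_succ.comp hr, fun i => ?_⟩
      have := mul_pos (halt i) h01
      simp only [Fin.tail, Fin.succ_zero_eq_one] at this
      simp only [Function.comp_apply]
      nlinarith [mul_self_pos.2 (hd 1)]

lemma exists_strictMono_alternating_of_lt_sPlus {n m : ℕ} (y : Fin n → ℝ) (hm : m < sPlus y) :
    ∃ r : Fin (m + 2) → Fin n, StrictMono r ∧
      ∃ σ : ℝ, σ ≠ 0 ∧ ∀ i : Fin (m + 2), 0 ≤ (-1) ^ (i : ℕ) * σ * y (r i) := by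
  rcases n with _ | n
  · simp [sPlus, signChanges] at hm
  obtain ⟨ε, -, hε⟩ := Finset.exists_mem_eq_sup Finset.univ Finset.univ_nonempty
    fun ε : Fin (n + 1) → Bool => signChanges (List.ofFn fun i =>
      if y i = 0 then (if ε i then (1:ℝ) else -1) else y i)
  set d : Fin (n + 1) → ℝ := fun i => if y i = 0 then (if ε i then 1 else -1) else y i
  have hd : ∀ i, d i ≠ 0 := fun i => by simp only [d]; split_ifs <;> norm_num [*]
  obtain ⟨r, hr, halt⟩ := exists_strictMono_alternating_of_le_signChanges d hd
    (m := m + 1) (by rw [← hε]; exact hm)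
  refine ⟨r, hr, d 0, hd 0, fun i => ?_⟩
  by_cases hy : y (r i) = 0
  · simp [hy]
  · have : d (r i) = y (r i) := if_neg hy
    exact (this ▸ halt i).le

lemma det_of_cons_mulVec_eq_zero {R : Type*} [CommRing R] [IsDomain R] {m : ℕ}
    (B : Matrix (Fin (m + 1)) (Fin m) R) (c : Fin m → R) :
    (Matrix.of fun i => Fin.cons ((B *ᵥ c) i) (B i) : Matrix (Fin (m + 1)) (Fin (m + 1)) R).det
      = 0 := by
  refine Matrix.exists_mulVec_eq_zero_iff.1 ⟨Fin.cons (-1) c, fun h => ?_, ?_⟩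
  · simpa using congrFun h 0
  · ext i
    simp [Matrix.mulVec, dotProduct, Fin.sum_univ_succ]

lemma eq_zero_of_sum_alternating_eq_zero {m : ℕ} {y D : Fin m → ℝ} {σ : ℝ} (hσ : σ ≠ 0)
    (hD : ∀ i, 0 < D i) (hy : ∀ i : Fin m, 0 ≤ (-1) ^ (i : ℕ) * σ * y i)
    (hsum : ∑ i : Fin m, (-1) ^ (i : ℕ) * y i * D i = 0) (i : Fin m) : y i = 0 := by
  have hterm : ∀ i ∈ (Finset.univ : Finset (Fin m)), 0 ≤ σ * ((-1) ^ (i : ℕ) * y i * D i) :=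
    fun i _ => by linarith [mul_nonneg (hy i) (hD i).le]
  have := (Finset.sum_eq_zero_iff_of_nonneg hterm).1
    (by rw [← Finset.mul_sum, hsum, mul_zero]) i (Finset.mem_univ i)
  simpa [hσ, (hD i).ne'] using this

theorem sPlus_mulVec_le_of_det_submatrix_pos {n m : ℕ} (B : Matrix (Fin n) (Fin (m + 1)) ℝ)
    (hB : ∀ r : Fin (m + 1) → Fin n, StrictMono r → 0 < (B.submatrix r id).det)
    {c : Fin (m + 1) → ℝ} (hc : c ≠ 0) : sPlus (B *ᵥ c) ≤ m := by
  by_contra! hm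
  obtain ⟨r, hr, σ, hσ, hsign⟩ := exists_strictMono_alternating_of_lt_sPlus (B *ᵥ c) hm
  have hy : ∀ i, (B *ᵥ c) (r i) = 0 := by
    refine eq_zero_of_sum_alternating_eq_zero hσ
      (fun i => hB _ (hr.comp (Fin.strictMono_succAbove i))) hsign ?_
    rw [← det_of_cons_mulVec_eq_zero (B.submatrix r id) c, Matrix.det_succ_column_zero]
    rfl
  refine hc (Matrix.eq_zero_of_mulVec_eq_zero (hB _ (hr.comp Fin.strictMono_castSucc)).ne' ?_)
  ext i
  exact hy i.castSucc

def blockMatrix {ι κ R : Type*} [DecidableEq κ] [Zero R] (g : ι → κ) (w : ι → R) :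
    Matrix ι κ R :=
  Matrix.of fun j p => if g j = p then w j else 0

lemma blockMatrix_mulVec_apply {ι κ R : Type*} [Fintype κ] [DecidableEq κ]
    [NonUnitalNonAssocSemiring R] (g : ι → κ) (w : ι → R) (c : κ → R) (j : ι) :
    (blockMatrix g w *ᵥ c) j = w j * c (g j) := by
  simp [blockMatrix, Matrix.mulVec, dotProduct]

lemma Monotone.strictMono_of_leftInverse {α β : Type*} [LinearOrder α] [Preorder β] {g : α → β}
    (hg : Monotone g) {J : β → α} (hJ : Function.LeftInverse g J) : StrictMono J :=
  fun p q hpq => lt_of_not_ge fun hle => hpq.not_ge (hJ q ▸ hJ p ▸ hg hle)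

theorem det_mul_blockMatrix_eq_sum {R : Type*} [CommRing R] {m n : ℕ}
    (A : Matrix (Fin m) (Fin n) R) (g : Fin n → Fin m) (w : Fin n → R) :
    (A * blockMatrix g w).det = ∑ J ∈ Fintype.piFinset fun p => {j | g j = p},
      (∏ p, w (J p)) * (A.submatrix id J).det := by
  have hcols : (A * blockMatrix g w)ᵀ = fun p => ∑ j ∈ {j | g j = p}, w j • Aᵀ j := by
    ext p i
    simp [Matrix.mul_apply, blockMatrix, Finset.sum_filter, mul_comm]
  rw [← Matrix.det_transpose, hcols]
  refine ((Matrix.detRowAlternating (R := R) (n := Fin m)).toMultilinearMap.map_sum_finset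
    _ _).trans (Finset.sum_congr rfl fun J _ => ?_)
  rw [MultilinearMap.map_smul_univ, smul_eq_mul, ← Matrix.det_transpose (A.submatrix id J)]
  rfl

theorem det_mul_blockMatrix_pos {m n : ℕ} (A : Matrix (Fin m) (Fin n) ℝ)
    (hA : ∀ col : Fin m → Fin n, StrictMono col → 0 < (A.submatrix id col).det)
    {g : Fin n → Fin m} (hg : Monotone g) {w : Fin n → ℝ} (hw : ∀ j, 0 ≤ w j)
    (hpos : ∀ p, ∃ j, g j = p ∧ 0 < w j) : 0 < (A * blockMatrix g w).det := by
  choose J hJg hJw using hpos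
  rw [det_mul_blockMatrix_eq_sum]
  refine Finset.sum_pos' (fun J' hJ' => ?_) ⟨J, by simpa using hJg, ?_⟩
  · have hJ'g : Function.LeftInverse g J' := fun p => by simpa using Fintype.mem_piFinset.1 hJ' p
    exact mul_nonneg (Finset.prod_nonneg fun p _ => hw _)
      (hA _ (hg.strictMono_of_leftInverse hJ'g)).le
  · exact mul_pos (Finset.prod_pos fun p _ => hJw p) (hA _ (hg.strictMono_of_leftInverse hJg))

lemma monotone_finCons {α : Type*} [Preorder α] {n : ℕ} {f : Fin n → α} {a : α}
    (ha : ∀ i, a ≤ f i) (hf : Monotone f) : Monotone (Fin.cons a f : Fin (n + 1) → α) :=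
  monotone_iff_forall_lt.2 <| (Fin.liftFun_cons _).2 ⟨ha, monotone_iff_forall_lt.1 hf⟩

structure IsBlockDecomposition {n m : ℕ} (x : Fin n → ℝ) (g : Fin n → Fin m) (w : Fin n → ℝ)
    (c : Fin m → ℝ) : Prop where
  monotone : Monotone g
  nonneg : ∀ j, 0 ≤ w j
  exists_pos : ∀ p, ∃ j, g j = p ∧ 0 < w j
  apply_eq : ∀ j, x j = w j * c (g j)

lemma IsBlockDecomposition.blockMatrix_mulVec {n m : ℕ} {x : Fin n → ℝ} {g : Fin n → Fin m}
    {w : Fin n → ℝ} {c : Fin m → ℝ} (h : IsBlockDecomposition x g w c) :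
    blockMatrix g w *ᵥ c = x :=
  funext fun j => (blockMatrix_mulVec_apply g w c j).trans (h.apply_eq j).symm

lemma isBlockDecomposition_cons_zero {n : ℕ} (a : ℝ) :
    IsBlockDecomposition (Fin.cons a 0 : Fin (n + 1) → ℝ) (0 : Fin (n + 1) → Fin 1) (Fin.cons 1 0)
      fun _ => a where
  monotone := monotone_const
  nonneg j := Fin.cases zero_le_one (fun _ => le_rfl) j
  exists_pos _ := ⟨0, Subsingleton.elim _ _, one_pos⟩
  apply_eq j := Fin.cases (by simp) (fun _ => by simp) j

namespace IsBlockDecomposition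

variable {n k : ℕ} {y : Fin n → ℝ} {g : Fin n → Fin (k + 1)} {w : Fin n → ℝ} {c : Fin (k + 1) → ℝ}

lemma cons (h : IsBlockDecomposition y g w c) {a w₀ : ℝ} (hw₀ : 0 ≤ w₀) (ha : a = w₀ * c 0) :
    IsBlockDecomposition (Fin.cons a y : Fin (n + 1) → ℝ) (Fin.cons 0 g) (Fin.cons w₀ w) c where
  monotone := monotone_finCons (fun _ => Fin.zero_le _) h.monotone
  nonneg j := Fin.cases hw₀ h.nonneg j
  exists_pos p := let ⟨j, hj⟩ := h.exists_pos p; ⟨j.succ, hj⟩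
  apply_eq j := Fin.cases ha h.apply_eq j

lemma cons_succ (h : IsBlockDecomposition y g w c) (a : ℝ) :
    IsBlockDecomposition (Fin.cons a y : Fin (n + 1) → ℝ) (Fin.cons 0 (Fin.succ ∘ g))
      (Fin.cons 1 w) (Fin.cons a c) where
  monotone := monotone_finCons (fun _ => Fin.zero_le _)
    (Fin.strictMono_succ.monotone.comp h.monotone)
  nonneg j := Fin.cases zero_le_one h.nonneg j
  exists_pos p := Fin.cases ⟨0, rfl, one_pos⟩
    (fun p => let ⟨j, hj, hw⟩ := h.exists_pos p; ⟨j.succ, by simp [hj], hw⟩) p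
  apply_eq j := Fin.cases (by simp) (fun j => by simp [h.apply_eq j]) j

end IsBlockDecomposition

def nonzeros {n : ℕ} (x : Fin n → ℝ) : List ℝ :=
  (List.ofFn x).filter fun u => decide (u ≠ 0)

lemma sMinus_eq_signChanges_nonzeros {n : ℕ} (x : Fin n → ℝ) :
    sMinus x = signChanges (nonzeros x) := rfl

lemma nonzeros_cons {n : ℕ} (a : ℝ) (y : Fin n → ℝ) :
    nonzeros (Fin.cons a y : Fin (n + 1) → ℝ) = if a = 0 then nonzeros y else a :: nonzeros y := by
  rw [nonzeros, List.ofFn_succ, List.filter_cons]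
  split_ifs <;> simp_all [nonzeros]

lemma sMinus_le_sMinus_cons {n : ℕ} (a : ℝ) (y : Fin n → ℝ) :
    sMinus y ≤ sMinus (Fin.cons a y : Fin (n + 1) → ℝ) := by
  simp only [sMinus_eq_signChanges_nonzeros, nonzeros_cons]
  split_ifs
  exacts [le_rfl, signChanges_le_cons a _]

/- The condition on `(nonzeros x).head?` says that the first run carries the sign of the first
nonzero entry; it decides whether a new leading entry opens a new run. -/
lemma exists_isBlockDecomposition_cons {n k : ℕ} {y : Fin n → ℝ} {g : Fin n → Fin (k + 1)}
    {w : Fin n → ℝ} {c : Fin (k + 1) → ℝ} (h : IsBlockDecomposition y g w c) (hk : k ≤ sMinus y)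
    {b : ℝ} {F : List ℝ} (hF : nonzeros y = b :: F) (hb : 0 < c 0 * b) (a : ℝ) :
    ∃ k' ≤ sMinus (Fin.cons a y : Fin (n + 1) → ℝ), ∃ (g' : Fin (n + 1) → Fin (k' + 1))
      (w' : Fin (n + 1) → ℝ) (c' : Fin (k' + 1) → ℝ), IsBlockDecomposition (Fin.cons a y) g' w' c' ∧
      ∀ b' ∈ (nonzeros (Fin.cons a y : Fin (n + 1) → ℝ)).head?, 0 < c' 0 * b' := by
  have hc0 : c 0 ≠ 0 := by rintro h; simp [h] at hb
  by_cases hac : a * c 0 < 0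
  · have ha : a ≠ 0 := by rintro rfl; simp at hac
    have hab : a * b < 0 := by nlinarith [mul_self_pos.2 hc0]
    refine ⟨k + 1, ?_, _, _, _, h.cons_succ a, by simp [nonzeros_cons, ha, mul_self_pos.2 ha]⟩
    rw [sMinus_eq_signChanges_nonzeros, nonzeros_cons, if_neg ha, hF, signChanges_cons_cons,
      if_pos hab, ← hF, ← sMinus_eq_signChanges_nonzeros]
    omega
  · have hw₀ : 0 ≤ a / c 0 := by
      rw [show a / c 0 = a * c 0 / (c 0 * c 0) by field_simp]
      exact div_nonneg (not_lt.1 hac) (mul_self_nonneg _)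
    refine ⟨k, hk.trans (sMinus_le_sMinus_cons a y), _, _, _,
      h.cons hw₀ (div_mul_cancel₀ a hc0).symm, ?_⟩
    rw [nonzeros_cons]
    split_ifs with ha
    · simpa [hF] using hb
    · simpa [mul_comm] using lt_of_le_of_ne (not_lt.1 hac) (mul_ne_zero ha hc0).symm

theorem exists_isBlockDecomposition {n : ℕ} (x : Fin n → ℝ) (hx : x ≠ 0) :
    ∃ k ≤ sMinus x, ∃ (g : Fin n → Fin (k + 1)) (w : Fin n → ℝ) (c : Fin (k + 1) → ℝ),
      IsBlockDecomposition x g w c ∧ ∀ b ∈ (nonzeros x).head?, 0 < c 0 * b := by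
  induction n with
  | zero => exact absurd (Subsingleton.elim x 0) hx
  | succ n ih =>
    obtain ⟨a, y, rfl⟩ : ∃ a y, x = Fin.cons a y := ⟨x 0, Fin.tail x, (Fin.cons_self_tail x).symm⟩
    by_cases hy : y = 0
    · subst hy
      have ha : a ≠ 0 := fun ha => hx (ha ▸ Matrix.cons_zero_zero)
      exact ⟨0, Nat.zero_le _, 0, _, _, isBlockDecomposition_cons_zero a,
        by simp [nonzeros_cons, ha, mul_self_pos.2 ha]⟩
    obtain ⟨k, hk, g, w, c, hdec, hhead⟩ := ih y hy
    obtain ⟨b, F, hF⟩ : ∃ b F, nonzeros y = b :: F := by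
      obtain ⟨j, hj⟩ := Function.ne_iff.1 hy
      exact List.exists_cons_of_ne_nil
        (List.ne_nil_of_mem (a := y j) (by simpa [nonzeros] using hj))
    exact exists_isBlockDecomposition_cons hdec hk hF (hhead b (by simp [hF])) a

namespace IsTP

variable {n : ℕ} {A : Matrix (Fin n) (Fin n) ℝ}

lemma det_pos (hA : IsTP A) : 0 < A.det := by
  simpa using hA n id id strictMono_id strictMono_id

lemma mulVec_ne_zero (hA : IsTP A) {x : Fin n → ℝ} (hx : x ≠ 0) : A *ᵥ x ≠ 0 :=
  fun h => hx (Matrix.eq_zero_of_mulVec_eq_zero hA.det_pos.ne' h)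

theorem sPlus_mulVec_le_sMinus (hA : IsTP A) {x : Fin n → ℝ} (hx : x ≠ 0) :
    sPlus (A *ᵥ x) ≤ sMinus x := by
  obtain ⟨k, hk, g, w, c, hdec, -⟩ := exists_isBlockDecomposition x hx
  have hc : c ≠ 0 := fun hc => hx (funext fun j => by simp [hdec.apply_eq j, hc])
  have hAx : A *ᵥ x = (A * blockMatrix g w) *ᵥ c := by
    rw [← Matrix.mulVec_mulVec, hdec.blockMatrix_mulVec]
  rw [hAx]
  refine (sPlus_mulVec_le_of_det_submatrix_pos _ (fun r hr => ?_) hc).trans hk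
  exact det_mul_blockMatrix_pos (A.submatrix r id) (fun col hcol => hA _ r col hr hcol)
    hdec.monotone hdec.nonneg hdec.exists_pos

end IsTP

theorem stmt5_general {n : ℕ}
    (a b : ℝ)
    (Φ : ℝ → ℝ → Matrix (Fin n) (Fin n) ℝ)
    (hTP : ∀ t0 t : ℝ, a < t0 → t0 < t → t < b → IsTP (Φ t t0))
    (z : ℝ → Fin n → ℝ)
    (hz : ∀ t0 ∈ Set.Ioo a b, ∀ t ∈ Set.Ioo a b, t0 ≤ t → z t = (Φ t t0).mulVec (z t0))
    (hz0 : ∃ t1 ∈ Set.Ioo a b, z t1 ≠ 0)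
    (τ : ℝ) (hτ : τ ∈ Set.Ioo a b) (hV : sMinus (z τ) ≠ sPlus (z τ)) :
    ∀ s t : ℝ, a < s → s < τ → τ < t → t < b → sPlus (z t) < sPlus (z s) := by
  intro s t has hsτ hτt htb
  have hs : s ∈ Ioo a b := ⟨has, hsτ.trans hτ.2⟩
  have hzs : z s ≠ 0 := by
    obtain ⟨t₁, ht₁, hzt₁⟩ := hz0
    rcases le_or_gt s t₁ with h | h
    · exact fun h0 => hzt₁ (by rw [hz s hs t₁ ht₁ h, h0, Matrix.mulVec_zero])
    · rw [hz t₁ ht₁ s hs h.le]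
      exact (hTP t₁ s ht₁.1 h hs.2).mulVec_ne_zero hzt₁
  have hτs := hz s hs τ hτ hsτ.le
  have hzτ : z τ ≠ 0 := hτs ▸ (hTP s τ has hsτ hτ.2).mulVec_ne_zero hzs
  calc sPlus (z t) ≤ sMinus (z τ) := by
        rw [hz τ hτ t ⟨hτ.1.trans hτt, htb⟩ hτt.le]
        exact (hTP τ t hτ.1 hτt htb).sPlus_mulVec_le_sMinus hzτ
    _ < sPlus (z τ) := (sMinus_le_sPlus _).lt_of_ne hV
    _ ≤ sMinus (z s) := hτs ▸ (hTP s τ has hsτ hτ.2).sPlus_mulVec_le_sMinus hzs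
    _ ≤ sPlus (z s) := sMinus_le_sPlus _

/-- If the transition matrix `Φ(t,t0)` of `ż = A(t)z` is TP for all
`a < t0 < t < b` and a nontrivial solution `z` satisfies `z(τ) ∉ V` (i.e.
`s^-(z(τ)) ≠ s^+(z(τ))`) for some `τ ∈ (a,b)`, then `s^+(z(·))` strictly decreases
across `τ`: `s^+(z(t)) < s^+(z(s))` whenever `a < s < τ < t < b`. -/
theorem stmt5 {n : ℕ}
    (a b : ℝ) (A : ℝ → Matrix (Fin n) (Fin n) ℝ)
    (Φ : ℝ → ℝ → Matrix (Fin n) (Fin n) ℝ)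
    (hreg : GoodCoeff a b A) (htrans : IsTransitionOn a b A Φ)
    (hTP : ∀ t0 t : ℝ, a < t0 → t0 < t → t < b → IsTP (Φ t t0))
    (z : ℝ → Fin n → ℝ)
    (hz : ∀ t0 ∈ Set.Ioo a b, ∀ t ∈ Set.Ioo a b, t0 ≤ t → z t = (Φ t t0).mulVec (z t0))
    (hz0 : ∃ t1 ∈ Set.Ioo a b, z t1 ≠ 0)
    (τ : ℝ) (hτ : τ ∈ Set.Ioo a b) (hV : sMinus (z τ) ≠ sPlus (z τ)) :
    ∀ s t : ℝ, a < s → s < τ → τ < t → t < b → sPlus (z t) < sPlus (z s) :=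
  stmt5_general a b Φ hTP z hz hz0 τ hτ hV
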